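/- arXiv:2412.09781 — 2 statements merged into one kernel-verified Lean document; each statement's English description precedes it below -/
import Mathlib

section
/- In the Rudolph–Grover rebit encoding, the encoded Pauli Y on logical qubit j is realized by the real operator Y_j^{RE} = (X_j Z_j) ⊗ (X Z)_{ancilla}; that is, for every n-qubit state |ψ⟩, the rebit encoding of Y_j|ψ⟩ equals (X_j Z_j ⊗ X Z)|ψ^{RE}⟩. -/
/-- The Rudolph–Grover rebit encoding of an `n`-qubit state. -/
noncomputable def rebitEnc {n : ℕ} (ψ : (Fin n → Fin 2) → ℂ) :
    (Fin n → Fin 2) × Fin 2 → ℂ :=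
  fun p => if p.2 = 0 then ((ψ p.1).re : ℂ) else ((ψ p.1).im : ℂ)

/-- The complex Pauli `Y = iXZ` acting on the `j`-th logical qubit
(`Y|0⟩ = i|1⟩`, `Y|1⟩ = −i|0⟩`, written on amplitude functions). -/
noncomputable def Yop {n : ℕ} (j : Fin n) (ψ : (Fin n → Fin 2) → ℂ) :
    (Fin n → Fin 2) → ℂ :=
  fun v => if v j = 0 then -Complex.I * ψ (Function.update v j 1)
    else Complex.I * ψ (Function.update v j 0)

/-- The real operator `X_j Z_j` (i.e. `XZ = [[0,-1],[1,0]]`) on the `j`-th qubit of the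
encoded register. -/
def XZj {n : ℕ} (j : Fin n) (φ : (Fin n → Fin 2) × Fin 2 → ℂ) :
    (Fin n → Fin 2) × Fin 2 → ℂ :=
  fun p => if p.1 j = 0 then -φ (Function.update p.1 j 1, p.2)
    else φ (Function.update p.1 j 0, p.2)

/-- The real operator `XZ` on the ancilla rebit. -/
def ancXZ {n : ℕ} (φ : (Fin n → Fin 2) × Fin 2 → ℂ) :
    (Fin n → Fin 2) × Fin 2 → ℂ :=
  fun p => if p.2 = 0 then -φ (p.1, 1) else φ (p.1, 0)

/-- In the Rudolph–Grover rebit encoding, the encoded Pauli `Y` on logical qubit `j` is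
realized by the real operator `Y_j^{RE} = (X_j Z_j) ⊗ (XZ)_{anc}`: for every state
`|ψ⟩`, `(Y_j|ψ⟩)^{RE} = (X_j Z_j ⊗ XZ)|ψ^{RE}⟩`. -/
theorem stmt11 {n : ℕ} (j : Fin n) (ψ : (Fin n → Fin 2) → ℂ) :
    rebitEnc (Yop j ψ) = ancXZ (XZj j (rebitEnc ψ)) := by
  funext p
  obtain ⟨v, a⟩ := p
  simp only [rebitEnc, Yop, XZj, ancXZ]
  rcases Fin.exists_fin_two.mp ⟨a, rfl⟩ with _ | _ <;>
  by_cases h : v j = 0 <;>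
    simp [h, Function.update_self, Complex.ext_iff]
end

section
/- In the Rudolph–Grover rebit encoding, the encoded phase gate S on logical qubit j is realized by the real circuit S_j^{RE} = CNOT_{j,anc} ∘ CZ_{j,anc}; that is, for every n-qubit state |ψ⟩, the rebit encoding of S_j|ψ⟩ equals CNOT_{j,anc} CZ_{j,anc} |ψ^{RE}⟩, where anc denotes the extra rebit. -/
/-- The phase gate `S = diag(1, i)` on the `j`-th logical qubit. -/
noncomputable def Sop {n : ℕ} (j : Fin n) (ψ : (Fin n → Fin 2) → ℂ) :
    (Fin n → Fin 2) → ℂ :=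
  fun v => if v j = 1 then Complex.I * ψ v else ψ v

/-- `CNOT_{j,anc}`: flips the ancilla rebit controlled on the `j`-th qubit
(written on amplitude functions; CNOT is a self-inverse permutation of the basis). -/
def cnotJA {n : ℕ} (j : Fin n) (φ : (Fin n → Fin 2) × Fin 2 → ℂ) :
    (Fin n → Fin 2) × Fin 2 → ℂ :=
  fun p => if p.1 j = 1 then φ (p.1, p.2 + 1) else φ p

/-- `CZ_{j,anc}`: applies a `−1` phase when both the `j`-th qubit and the ancilla are
in state `|1⟩`. -/
def czJA {n : ℕ} (j : Fin n) (φ : (Fin n → Fin 2) × Fin 2 → ℂ) :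
    (Fin n → Fin 2) × Fin 2 → ℂ :=
  fun p => if p.1 j = 1 ∧ p.2 = 1 then -φ p else φ p

/-- In the Rudolph–Grover rebit encoding, the encoded phase gate `S` on logical qubit
`j` is realized by the real circuit `S_j^{RE} = CNOT_{j,anc} ∘ CZ_{j,anc}`: for every
state `|ψ⟩`, `(S_j|ψ⟩)^{RE} = CNOT_{j,anc} CZ_{j,anc} |ψ^{RE}⟩`. -/
theorem stmt12 {n : ℕ} (j : Fin n) (ψ : (Fin n → Fin 2) → ℂ) :
    rebitEnc (Sop j ψ) = cnotJA j (czJA j (rebitEnc ψ)) := by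
  funext ⟨v, a⟩
  by_cases h : v j = 1 <;> fin_cases a <;>
    simp [rebitEnc, Sop, cnotJA, czJA, h, Complex.mul_re, Complex.mul_im]
end
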